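/- arXiv:math/0305320 — 2 statements merged into one kernel-verified Lean document; each statement's English description precedes it below -/
import Mathlib

section
/- Let p be a prime, n a positive integer, q = p^n, and d = q + 1. Let F be a finite field with q^2 elements, let F_0 = {x in F : x^q = x} be its subfield with q elements, let H = F(t) be the rational function field over F, and let F' be the subfield of H generated by F_0 and the element t^d (so F' = F_0(t^d) = F_0(u) with u = t^d). Then H is a Galois extension of F' of degree 2d, and the Galois group Gal(H/F') is isomorphic to the dihedral group of order 2d; in particular, Gal(H/K) (with K = F(t^d)) is a cyclic normal subgroup of order d on which the nontrivial element of Gal(K/F') acts by inversion. -/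
/-!
Write `q = pⁿ`, `d = q + 1`, let `ζ ∈ F` be a primitive `d`-th root of unity and `φ` the
`q`-power Frobenius of `F`, an involution with fixed field `F₀` and `φ ζ = ζ^q = ζ⁻¹`.
The rotation `σ : X ↦ ζ X` and the reflection `τ`, applying `φ` to coefficients, fix `F₀` and
`Xᵈ`, and satisfy `σᵈ = τ² = 1`, `σ τ = τ σ⁻¹`. Since `σ` has order `d` and `τ` moves `ζ`, they
embed the dihedral group of order `2d` into `Gal(F(X)/F')`. Conversely `F(X) = F'(X, ζ)`, where
`X` is a root of `Tᵈ - Xᵈ` and `ζ` of `T² - (ζ + ζ⁻¹) T + 1`, so `[F(X) : F'] ≤ 2d`. Hence the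
embedding is onto and `F(X)/F'` is Galois of degree `2d`. The subgroup fixing `F(Xᵈ)` contains
`σ` but not `τ`, so it is the rotation subgroup `⟨σ⟩`.
-/

section

variable {G : Type*} [Group G] {a b : G}

section lift

variable {n : ℕ} [NeZero n]

theorem pow_val_add_of_pow_eq_one (ha : a ^ n = 1) (i j : ZMod n) :
    a ^ (i + j).val = a ^ i.val * a ^ j.val := by
  rw [ZMod.val_add, ← pow_eq_pow_mod _ ha, pow_add]

theorem pow_val_neg_of_pow_eq_one (ha : a ^ n = 1) (i : ZMod n) :
    a ^ (-i).val = (a ^ i.val)⁻¹ :=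
  eq_inv_of_mul_eq_one_left <| by
    rw [← pow_val_add_of_pow_eq_one ha, neg_add_cancel, ZMod.val_zero, pow_zero]

namespace DihedralGroup

def lift (a b : G) (ha : a ^ n = 1) (hb : b * b = 1) (hab : a * b = b * a⁻¹) :
    DihedralGroup n →* G where
  toFun
    | r i => a ^ i.val
    | sr i => b * a ^ i.val
  map_one' := show a ^ (0 : ZMod n).val = 1 by rw [ZMod.val_zero, pow_zero]
  map_mul' := by
    have hpow : ∀ i : ZMod n, a ^ i.val * b = b * a ^ (-i).val := fun i => by
      rw [pow_val_neg_of_pow_eq_one ha, ← inv_pow,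
        (SemiconjBy.pow_right (show SemiconjBy b a⁻¹ a from hab.symm) i.val).eq]
    rintro (i | i) (j | j)
    · simp only [r_mul_r, pow_val_add_of_pow_eq_one ha]
    · simp only [r_mul_sr, sub_eq_neg_add, pow_val_add_of_pow_eq_one ha, ← mul_assoc, hpow]
    · simp only [sr_mul_r, pow_val_add_of_pow_eq_one ha, mul_assoc]
    · simp only [sr_mul_sr, sub_eq_neg_add, pow_val_add_of_pow_eq_one ha]
      rw [← mul_assoc, mul_assoc b, hpow, ← mul_assoc, hb, one_mul]

variable {ha : a ^ n = 1} {hb : b * b = 1} {hab : a * b = b * a⁻¹}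

@[simp]
theorem lift_r (i : ZMod n) : lift a b ha hb hab (r i) = a ^ i.val := rfl

@[simp]
theorem lift_sr (i : ZMod n) : lift a b ha hb hab (sr i) = b * a ^ i.val := rfl

theorem lift_injective (hao : orderOf a = n) (hb' : b ∉ Subgroup.zpowers a) :
    Function.Injective (lift a b ha hb hab) := by
  refine (injective_iff_map_eq_one _).mpr ?_
  rintro (i | i) h
  · rw [lift_r, ← orderOf_dvd_iff_pow_eq_one, hao] at h
    rw [(ZMod.val_eq_zero i).mp (Nat.eq_zero_of_dvd_of_lt h (ZMod.val_lt i)), r_zero]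
  · rw [lift_sr, mul_eq_one_iff_eq_inv] at h
    exact absurd (h ▸ inv_mem (Subgroup.npow_mem_zpowers a i.val)) hb'

theorem exists_eq_pow_or_eq_mul_pow (h : Function.Surjective (lift a b ha hb hab)) (g : G) :
    ∃ k : ℕ, g = a ^ k ∨ g = b * a ^ k := by
  obtain ⟨i | i, rfl⟩ := h g
  exacts [⟨i.val, .inl rfl⟩, ⟨i.val, .inr rfl⟩]

end DihedralGroup

end lift

theorem Subgroup.normal_of_conj_eq_inv {S : Subgroup G}
    (h : ∀ g ∉ S, ∀ t ∈ S, g * t * g⁻¹ = t⁻¹) : S.Normal where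
  conj_mem t ht g := by
    by_cases hg : g ∈ S
    · exact mul_mem (mul_mem hg ht) (inv_mem hg)
    · exact h g hg t ht ▸ inv_mem ht

theorem Subgroup.eq_zpowers_of_forall_eq_pow_or_eq_mul_pow
    (hG : ∀ g, ∃ k : ℕ, g = a ^ k ∨ g = b * a ^ k) {S : Subgroup G} (haS : a ∈ S) (hbS : b ∉ S) :
    S = Subgroup.zpowers a := by
  refine le_antisymm (fun g hg => ?_) (Subgroup.zpowers_le.mpr haS)
  obtain ⟨k, rfl | rfl⟩ := hG g
  · exact Subgroup.npow_mem_zpowers a k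
  · exact absurd ((Subgroup.mul_mem_cancel_right S (pow_mem haS k)).mp hg) hbS

theorem conj_eq_inv_of_notMem_zpowers (hG : ∀ g, ∃ k : ℕ, g = a ^ k ∨ g = b * a ^ k)
    (hb : b * b = 1) (hab : a * b = b * a⁻¹) {g t : G} (hg : g ∉ Subgroup.zpowers a)
    (ht : t ∈ Subgroup.zpowers a) : g * t * g⁻¹ = t⁻¹ := by
  obtain ⟨k, rfl | rfl⟩ := hG g
  · exact absurd (Subgroup.npow_mem_zpowers a k) hg
  obtain ⟨m, rfl⟩ := ht
  have hconj : b * a * b⁻¹ = a⁻¹ := by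
    rw [inv_eq_of_mul_eq_one_right hb, mul_assoc, hab, ← mul_assoc, hb, one_mul]
  calc b * a ^ k * a ^ m * (b * a ^ k)⁻¹ = (b * a * b⁻¹) ^ m := by rw [conj_zpow]; group
    _ = (a ^ m)⁻¹ := by rw [hconj, inv_zpow]

end

section

open Polynomial IntermediateField

theorem Subfield.eq_top_of_eqLocusField_le {F : Type*} [Field F] {φ : F →+* F}
    (hφ : ∀ x, φ (φ x) = x) {M : Subfield F} (hM : φ.eqLocusField (RingHom.id F) ≤ M)
    {ζ : F} (hζM : ζ ∈ M) (hζ : φ ζ ≠ ζ) : M = ⊤ := by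
  have hfix : ∀ y, y + φ y ∈ M := fun y => hM <| by simp [hφ, add_comm]
  have hφζM : φ ζ ∈ M := by simpa using sub_mem (hfix ζ) hζM
  refine eq_top_iff.mpr fun x _ => ?_
  -- Trace trick: `(ζ - φ ζ) x = (ζ x + φ (ζ x)) - φ ζ (x + φ x)`, both traces lie in `M`.
  have hx : x = ((ζ * x + φ (ζ * x)) - φ ζ * (x + φ x)) / (ζ - φ ζ) := by
    rw [eq_div_iff (sub_ne_zero.mpr hζ.symm), map_mul]
    ring
  rw [hx]
  exact div_mem (sub_mem (hfix _) (mul_mem hφζM (hfix x))) (sub_mem hζM hφζM)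

theorem finiteDimensional_of_adjoin_pair_eq_top {E L : Type*} [Field E] [Field L] [Algebra E L]
    {x y : L} (hx : IsIntegral E x) (hy : IsIntegral E y) (h : E⟮x, y⟯ = ⊤) :
    FiniteDimensional E L := by
  have : FiniteDimensional E E⟮x, y⟯ := finiteDimensional_adjoin (by simp [hx, hy])
  rw [h] at this
  exact topEquiv.toLinearEquiv.finiteDimensional

theorem finrank_le_of_adjoin_pair_eq_top {E L : Type*} [Field E] [Field L] [Algebra E L]
    {x y : L} {f g : E[X]} (hf : f ≠ 0) (hfx : aeval x f = 0) (hg : g ≠ 0) (hgy : aeval y g = 0)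
    (h : E⟮x, y⟯ = ⊤) : Module.finrank E L ≤ f.natDegree * g.natDegree := by
  have hx : IsIntegral E x := IsAlgebraic.isIntegral ⟨f, hf, hfx⟩
  have hgy' : aeval y (g.map (algebraMap E E⟮x⟯)) = 0 := by rwa [aeval_map_algebraMap]
  have hy : IsIntegral E⟮x⟯ y := IsAlgebraic.isIntegral ⟨_, (map_ne_zero hg), hgy'⟩
  have htop : E⟮x⟯⟮y⟯ = ⊤ := by
    rw [← restrictScalars_eq_top_iff (K := E), adjoin_simple_adjoin_simple, h]
  rw [← Module.finrank_mul_finrank E E⟮x⟯ L, adjoin.finrank hx, ← finrank_top', ← htop,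
    adjoin.finrank hy]
  gcongr
  · exact natDegree_le_natDegree (minpoly.degree_le_of_ne_zero E x hf hfx)
  · exact (natDegree_le_natDegree (minpoly.degree_le_of_ne_zero _ y (map_ne_zero hg) hgy')).trans
      (natDegree_map_le)

theorem IsGalois.of_finrank_le_card {E L : Type*} [Field E] [Field L] [Algebra E L]
    [FiniteDimensional E L] {m : ℕ} (hrank : Module.finrank E L ≤ m)
    (hcard : m ≤ Nat.card Gal(L/E)) :
    IsGalois E L ∧ Module.finrank E L = m ∧ Nat.card Gal(L/E) = m := by
  have hle : Nat.card Gal(L/E) ≤ Module.finrank E L := by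
    rw [Nat.card_eq_fintype_card]; exact AlgEquiv.card_le
  have hrank' : Module.finrank E L = m := by omega
  exact ⟨IsGalois.of_card_aut_eq_finrank E L (by omega), hrank', by omega⟩

end

theorem FiniteField.exists_isPrimitiveRoot_of_dvd {F : Type*} [Field F] [Fintype F] {d : ℕ}
    (hd : d ∣ Fintype.card F - 1) : ∃ ζ : F, IsPrimitiveRoot ζ d := by
  obtain ⟨g, hg⟩ := IsCyclic.exists_ofOrder_eq_natCard (α := Fˣ)
  rw [Nat.card_units, Nat.card_eq_fintype_card] at hg
  refine ⟨(g ^ (orderOf g / d) : Fˣ), IsPrimitiveRoot.coe_units_iff.mpr ?_⟩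
  have hord : orderOf (g ^ (orderOf g / d)) = d :=
    orderOf_pow_orderOf_div (orderOf_pos g).ne' (hg ▸ hd)
  simpa only [hord] using IsPrimitiveRoot.orderOf (g ^ (orderOf g / d))

theorem IsPrimitiveRoot.inv_ne_self {M : Type*} [CommGroupWithZero M] {ζ : M} {d : ℕ}
    (hζ : IsPrimitiveRoot ζ d) (hd : 2 < d) : ζ⁻¹ ≠ ζ := by
  intro h
  have h2 : ζ ^ 2 = 1 := by
    rw [sq]; nth_rw 1 [← h]; exact inv_mul_cancel₀ (hζ.ne_zero (by omega))
  have := Nat.le_of_dvd two_pos ((hζ.pow_eq_one_iff_dvd 2).mp h2)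
  omega

theorem FiniteField.exists_isPrimitiveRoot_pow_eq_inv {F : Type*} [Field F] [Fintype F] {q : ℕ}
    (hcard : Fintype.card F = q ^ 2) : ∃ ζ : F, IsPrimitiveRoot ζ (q + 1) ∧ ζ ^ q = ζ⁻¹ := by
  have hdvd : q + 1 ∣ Fintype.card F - 1 := ⟨q - 1, by simpa [hcard] using Nat.sq_sub_sq q 1⟩
  obtain ⟨ζ, hζ⟩ := exists_isPrimitiveRoot_of_dvd hdvd
  exact ⟨ζ, hζ, eq_inv_of_mul_eq_one_left (by rw [← pow_succ, hζ.pow_eq_one])⟩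

namespace RatFunc

variable {K : Type*} [Field K]

theorem closure_range_C_union_X :
    Subfield.closure (Set.range (C : K →+* RatFunc K) ∪ {X}) = ⊤ := by
  rw [← algebraMap_eq_C, ← IntermediateField.adjoin_toSubfield, adjoin_X,
    IntermediateField.top_toSubfield]

theorem ringHom_ext_of_C_X {L : Type*} [Semiring L] {f g : RatFunc K →+* L}
    (hC : ∀ a, f (C a) = g (C a)) (hX : f X = g X) : f = g :=
  RingHom.eq_of_eqOn_of_field_closure_eq_top closure_range_C_union_X <| by
    rintro x (⟨a, rfl⟩ | rfl)
    exacts [hC a, hX]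

theorem algEquiv_ext_of_C_X {E : Type*} [CommSemiring E] [Algebra E (RatFunc K)]
    {f g : RatFunc K ≃ₐ[E] RatFunc K}
    (hC : ∀ a, f (C a) = g (C a)) (hX : f X = g X) : f = g :=
  AlgEquiv.ext <| RingHom.congr_fun (ringHom_ext_of_C_X (f := f.toRingHom)
    (g := g.toRingHom) hC hX)

noncomputable def scaleX (c : K) (hc : c ≠ 0) : RatFunc K ≃ₐ[K] RatFunc K :=
  letI := invertibleOfNonzero hc
  IsFractionRing.algEquivOfAlgEquiv (Polynomial.algEquivCMulXAddC c 0)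

@[simp]
theorem scaleX_X (c : K) (hc : c ≠ 0) : scaleX c hc X = C c * X := by
  simp [scaleX, ← algebraMap_X, algebraMap_C]

theorem scaleX_X_pow {c : K} (hc : c ≠ 0) {d : ℕ} (hcd : c ^ d = 1) :
    scaleX c hc (X ^ d) = X ^ d := by
  rw [map_pow, scaleX_X, mul_pow, ← map_pow, hcd, map_one, one_mul]

noncomputable def mapRingEquiv (g : K ≃+* K) : RatFunc K ≃+* RatFunc K :=
  IsFractionRing.ringEquivOfRingEquiv (Polynomial.mapEquiv g)

@[simp]
theorem mapRingEquiv_C (g : K ≃+* K) (a : K) : mapRingEquiv g (C a) = C (g a) := by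
  simp [mapRingEquiv, ← algebraMap_C]

@[simp]
theorem mapRingEquiv_X (g : K ≃+* K) : mapRingEquiv g X = X := by
  simp [mapRingEquiv, ← algebraMap_X]

variable {F : Type*} [Field F] {F₀ : Subfield F} {d : ℕ} {ζ : F}

noncomputable def dihedralBase (F₀ : Subfield F) (d : ℕ) : Subfield (RatFunc F) :=
  Subfield.closure (algebraMap F (RatFunc F) '' F₀ ∪ {X ^ d})

theorem dihedralBase_le_eqLocusField {f : RatFunc F →+* RatFunc F}
    (hC : ∀ a ∈ F₀, f (C a) = C a) (hX : f (X ^ d) = X ^ d) :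
    dihedralBase F₀ d ≤ f.eqLocusField (RingHom.id _) := by
  refine Subfield.closure_le.mpr ?_
  rintro x (⟨a, ha, rfl⟩ | rfl)
  exacts [hC a ha, hX]

noncomputable def dihedralRotation (F₀ : Subfield F) [NeZero d] (hζ : IsPrimitiveRoot ζ d) :
    RatFunc F ≃ₐ[dihedralBase F₀ d] RatFunc F :=
  AlgEquiv.ofRingEquiv (f := (scaleX ζ (hζ.ne_zero (NeZero.ne d))).toRingEquiv) fun x =>
    dihedralBase_le_eqLocusField (f := (scaleX ζ _).toRingHom)
      (fun a _ => AlgEquiv.commutes (scaleX ζ _) a)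
      (scaleX_X_pow _ hζ.pow_eq_one) x.2

noncomputable def dihedralReflection (d : ℕ) (φ : F ≃+* F) (hφ₀ : ∀ a ∈ F₀, φ a = a) :
    RatFunc F ≃ₐ[dihedralBase F₀ d] RatFunc F :=
  AlgEquiv.ofRingEquiv (f := mapRingEquiv φ) fun x =>
    dihedralBase_le_eqLocusField (f := (mapRingEquiv φ).toRingHom) (by simp +contextual [hφ₀])
      (by simp) x.2

section

variable {φ : F ≃+* F} (hφ₀ : ∀ a ∈ F₀, φ a = a)

@[simp]
theorem dihedralReflection_C (a : F) : dihedralReflection d φ hφ₀ (C a) = C (φ a) :=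
  mapRingEquiv_C φ a

@[simp]
theorem dihedralReflection_X : dihedralReflection d φ hφ₀ X = X :=
  mapRingEquiv_X φ

theorem dihedralReflection_mul_self (hφφ : ∀ x, φ (φ x) = x) :
    dihedralReflection d φ hφ₀ * dihedralReflection d φ hφ₀ = 1 :=
  algEquiv_ext_of_C_X (by simp [hφφ]) (by simp)

end

section

variable [NeZero d] (hζ : IsPrimitiveRoot ζ d)

@[simp]
theorem dihedralRotation_C (a : F) : dihedralRotation F₀ hζ (C a) = C a :=
  AlgEquiv.commutes (scaleX ζ _) a

@[simp]
theorem dihedralRotation_X : dihedralRotation F₀ hζ X = C ζ * X :=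
  scaleX_X ζ _

theorem dihedralRotation_pow_C (k : ℕ) (a : F) : (dihedralRotation F₀ hζ ^ k) (C a) = C a := by
  induction k with
  | zero => rfl
  | succ k ih => rw [pow_succ, AlgEquiv.mul_apply, dihedralRotation_C, ih]

theorem dihedralRotation_pow_X (k : ℕ) : (dihedralRotation F₀ hζ ^ k) X = C (ζ ^ k) * X := by
  induction k with
  | zero => simp
  | succ k ih =>
    rw [pow_succ, AlgEquiv.mul_apply, dihedralRotation_X, map_mul, ih, dihedralRotation_pow_C,
      ← mul_assoc, ← map_mul, ← pow_succ']

theorem orderOf_dihedralRotation : orderOf (dihedralRotation F₀ hζ) = d := by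
  refine (orderOf_eq_orderOf_iff.mpr fun k => ⟨fun h => ?_, fun h => ?_⟩).trans hζ.eq_orderOf.symm
  · have hX := dihedralRotation_pow_X (F₀ := F₀) hζ k
    rw [h, AlgEquiv.one_apply, eq_comm, mul_eq_right₀ X_ne_zero, ← map_one C] at hX
    exact C_injective hX
  · refine algEquiv_ext_of_C_X (fun a => ?_) ?_
    · rw [dihedralRotation_pow_C, AlgEquiv.one_apply]
    · rw [dihedralRotation_pow_X, h, map_one, one_mul, AlgEquiv.one_apply]

theorem dihedralRotation_pow_eq_one : dihedralRotation F₀ hζ ^ d = 1 := by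
  simpa only [orderOf_dihedralRotation] using pow_orderOf_eq_one (dihedralRotation F₀ hζ)

variable {φ : F ≃+* F} (hφ₀ : ∀ a ∈ F₀, φ a = a)

theorem dihedralRotation_mul_dihedralReflection (hφζ : φ ζ = ζ⁻¹) :
    dihedralRotation F₀ hζ * dihedralReflection d φ hφ₀ =
      dihedralReflection d φ hφ₀ * (dihedralRotation F₀ hζ)⁻¹ := by
  refine eq_mul_inv_of_mul_eq (algEquiv_ext_of_C_X (by simp) ?_)
  simp only [AlgEquiv.mul_apply, dihedralRotation_X, map_mul, dihedralReflection_C,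
    dihedralReflection_X, dihedralRotation_C, hφζ]
  rw [← mul_assoc, ← map_mul, inv_mul_cancel₀ (hζ.ne_zero (NeZero.ne d)), map_one, one_mul]

theorem dihedralReflection_notMem_zpowers (hφζ : φ ζ ≠ ζ) :
    dihedralReflection d φ hφ₀ ∉ Subgroup.zpowers (dihedralRotation F₀ hζ) := by
  have hle : Subgroup.zpowers (dihedralRotation F₀ hζ) ≤ MulAction.stabilizer _ (C ζ) :=
    Subgroup.zpowers_le.mpr (by simp [MulAction.mem_stabilizer_iff, AlgEquiv.smul_def])
  intro h
  have := MulAction.mem_stabilizer_iff.mp (hle h)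
  rw [AlgEquiv.smul_def, dihedralReflection_C] at this
  exact hφζ (C_injective this)

noncomputable def dihedralHom (hφφ : ∀ x, φ (φ x) = x) (hφζ : φ ζ = ζ⁻¹) :
    DihedralGroup d →* RatFunc F ≃ₐ[dihedralBase F₀ d] RatFunc F :=
  DihedralGroup.lift (dihedralRotation F₀ hζ) (dihedralReflection d φ hφ₀)
    (dihedralRotation_pow_eq_one hζ) (dihedralReflection_mul_self hφ₀ hφφ)
    (dihedralRotation_mul_dihedralReflection hζ hφ₀ hφζ)

end

theorem X_pow_mem_dihedralBase : X ^ d ∈ dihedralBase F₀ d :=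
  Subfield.subset_closure (Or.inr rfl)

theorem C_mem_dihedralBase {a : F} (ha : a ∈ F₀) : C a ∈ dihedralBase F₀ d :=
  Subfield.subset_closure (Or.inl ⟨a, ha, rfl⟩)

theorem adjoin_X_C_eq_top {φ : F →+* F} (hφφ : ∀ x, φ (φ x) = x)
    (hF₀ : ∀ a, φ a = a → a ∈ F₀) (hφζ : φ ζ ≠ ζ) :
    IntermediateField.adjoin (dihedralBase F₀ d) {X, C ζ} = ⊤ := by
  set E := IntermediateField.adjoin (dihedralBase F₀ d) {X, C ζ}
  have hX : X ∈ E := IntermediateField.subset_adjoin _ _ (by simp)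
  have hCζ : C ζ ∈ E := IntermediateField.subset_adjoin _ _ (by simp)
  have hC : E.toSubfield.comap C = ⊤ :=
    Subfield.eq_top_of_eqLocusField_le hφφ
      (fun a ha => E.algebraMap_mem ⟨C a, C_mem_dihedralBase (hF₀ a ha)⟩) hCζ hφζ
  have hle : Subfield.closure (Set.range C ∪ {X}) ≤ E.toSubfield := by
    refine Subfield.closure_le.mpr ?_
    rintro _ (⟨a, rfl⟩ | rfl)
    exacts [(hC ▸ Subfield.mem_top a : a ∈ E.toSubfield.comap C), hX]
  rw [closure_range_C_union_X] at hle
  exact eq_top_iff.mpr fun z _ => hle (Subfield.mem_top z)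

theorem finiteDimensional_dihedralBase_and_finrank_le [NeZero d] (hζ : IsPrimitiveRoot ζ d)
    {φ : F ≃+* F} (hφφ : ∀ x, φ (φ x) = x) (hφζ : φ ζ = ζ⁻¹) (hF₀ : ∀ a, φ a = a → a ∈ F₀)
    (hd : 2 < d) : FiniteDimensional (dihedralBase F₀ d) (RatFunc F) ∧
      Module.finrank (dihedralBase F₀ d) (RatFunc F) ≤ 2 * d := by
  have htop := adjoin_X_C_eq_top (d := d) (φ := (φ : F →+* F)) hφφ hF₀ (hφζ ▸ hζ.inv_ne_self hd)
  have hs : C (ζ + ζ⁻¹) ∈ dihedralBase F₀ d :=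
    C_mem_dihedralBase (hF₀ _ (by rw [map_add, map_inv₀, hφζ, inv_inv, add_comm]))
  set f : Polynomial (dihedralBase F₀ d) :=
    Polynomial.X ^ d - Polynomial.C ⟨X ^ d, X_pow_mem_dihedralBase⟩
  set g : Polynomial (dihedralBase F₀ d) :=
    Polynomial.X ^ 2 - Polynomial.C ⟨_, hs⟩ * Polynomial.X + 1
  have hf : f ≠ 0 := (Polynomial.monic_X_pow_sub_C _ (NeZero.ne d)).ne_zero
  have hg : g.natDegree = 2 := by simp only [g]; compute_degree!
  have hg0 : g ≠ 0 := Polynomial.ne_zero_of_natDegree_gt (n := 0) (by omega)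
  have hfX : Polynomial.aeval (X : RatFunc F) f = 0 := by
    simp only [f, map_sub, map_pow, Polynomial.aeval_X, Polynomial.aeval_C]
    exact sub_self _
  have hgζ : Polynomial.aeval (C ζ) g = 0 := by
    have : ζ ^ 2 - (ζ + ζ⁻¹) * ζ + 1 = 0 := by field_simp [hζ.ne_zero (NeZero.ne d)]; ring
    simp only [g, map_add, map_sub, map_mul, map_pow, Polynomial.aeval_X, Polynomial.aeval_C,
      map_one]
    change C ζ ^ 2 - (C ζ + C ζ⁻¹) * C ζ + 1 = 0
    rw [← map_add, ← map_pow, ← map_mul, ← map_sub, ← map_one C, ← map_add, this, map_zero]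
  refine ⟨finiteDimensional_of_adjoin_pair_eq_top (IsAlgebraic.isIntegral ⟨f, hf, hfX⟩)
    (IsAlgebraic.isIntegral ⟨g, hg0, hgζ⟩) htop, ?_⟩
  calc Module.finrank (dihedralBase F₀ d) (RatFunc F) ≤ f.natDegree * g.natDegree :=
        finrank_le_of_adjoin_pair_eq_top hf hfX hg0 hgζ htop
    _ = 2 * d := by rw [Polynomial.natDegree_X_pow_sub_C, hg, mul_comm]

section

variable [NeZero d] (hζ : IsPrimitiveRoot ζ d) {φ : F ≃+* F} (hφ₀ : ∀ a ∈ F₀, φ a = a)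
  (hφφ : ∀ x, φ (φ x) = x) (hφζ : φ ζ = ζ⁻¹)

theorem dihedralHom_injective (hd : 2 < d) : Function.Injective (dihedralHom hζ hφ₀ hφφ hφζ) :=
  DihedralGroup.lift_injective (orderOf_dihedralRotation hζ)
    (dihedralReflection_notMem_zpowers hζ hφ₀ (hφζ ▸ hζ.inv_ne_self hd))

theorem isGalois_dihedralBase (hF₀ : ∀ a, φ a = a → a ∈ F₀) (hd : 2 < d) :
    IsGalois (dihedralBase F₀ d) (RatFunc F) ∧
      Module.finrank (dihedralBase F₀ d) (RatFunc F) = 2 * d ∧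
      Function.Bijective (dihedralHom hζ hφ₀ hφφ hφζ) := by
  obtain ⟨_, hrank⟩ := finiteDimensional_dihedralBase_and_finrank_le hζ hφφ hφζ hF₀ hd
  have hinj := dihedralHom_injective hζ hφ₀ hφφ hφζ hd
  have hcard : 2 * d ≤ Nat.card (RatFunc F ≃ₐ[dihedralBase F₀ d] RatFunc F) :=
    DihedralGroup.nat_card (n := d) ▸ Nat.card_le_card_of_injective _ hinj
  obtain ⟨hgal, hrank', hcard'⟩ := IsGalois.of_finrank_le_card hrank hcard
  exact ⟨hgal, hrank', hinj.bijective_of_nat_card_le (by rw [hcard', DihedralGroup.nat_card])⟩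

theorem subgroup_fixing_X_pow_spec (hd : 2 < d)
    (hsurj : Function.Surjective (dihedralHom hζ hφ₀ hφφ hφζ))
    {S : Subgroup (RatFunc F ≃ₐ[dihedralBase F₀ d] RatFunc F)}
    (hS : ∀ σ, σ ∈ S ↔
      ∀ x ∈ Subfield.closure (Set.range (algebraMap F (RatFunc F)) ∪ {X ^ d}), σ x = x) :
    S.Normal ∧ IsCyclic S ∧ Nat.card S = d ∧ ∀ σ, σ ∉ S → ∀ τ ∈ S, σ * τ * σ⁻¹ = τ⁻¹ := by
  have hG := DihedralGroup.exists_eq_pow_or_eq_mul_pow hsurj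
  have hrot : dihedralRotation F₀ hζ ∈ S := by
    refine (hS _).mpr fun x hx =>
      RingHom.eqOn_field_closure (f := (dihedralRotation F₀ hζ).toRingHom) (g := RingHom.id _) ?_ hx
    rintro _ (⟨a, rfl⟩ | rfl)
    exacts [dihedralRotation_C (F₀ := F₀) hζ a, scaleX_X_pow _ hζ.pow_eq_one]
  have hrefl : dihedralReflection d φ hφ₀ ∉ S := fun h => by
    have := (hS _).mp h (C ζ) (Subfield.subset_closure (Or.inl ⟨ζ, rfl⟩))
    rw [dihedralReflection_C, hφζ] at this
    exact hζ.inv_ne_self hd (C_injective this)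
  obtain rfl := Subgroup.eq_zpowers_of_forall_eq_pow_or_eq_mul_pow hG hrot hrefl
  have hconj : ∀ g ∉ Subgroup.zpowers (dihedralRotation F₀ hζ),
      ∀ t ∈ Subgroup.zpowers (dihedralRotation F₀ hζ), g * t * g⁻¹ = t⁻¹ := fun g hg t ht =>
    conj_eq_inv_of_notMem_zpowers hG (dihedralReflection_mul_self hφ₀ hφφ)
      (dihedralRotation_mul_dihedralReflection hζ hφ₀ hφζ) hg ht
  exact ⟨Subgroup.normal_of_conj_eq_inv hconj, inferInstance,
    by rw [Nat.card_zpowers, orderOf_dihedralRotation], hconj⟩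

end

end RatFunc

theorem stmt_9_general (p n : ℕ) (hp : p.Prime)
    (F : Type) [Field F] [Fintype F] (hcard : Fintype.card F = (p ^ n) ^ 2)
    (F₀ : Subfield F) (hF₀ : ∀ x : F, x ∈ F₀ ↔ x ^ (p ^ n) = x)
    (F' : Subfield (RatFunc F))
    (hF' : F' = Subfield.closure
      ((algebraMap F (RatFunc F)) '' (F₀ : Set F) ∪ {RatFunc.X ^ (p ^ n + 1)}))
    (K : Subfield (RatFunc F))
    (hK : K = Subfield.closure
      (Set.range (algebraMap F (RatFunc F)) ∪ {RatFunc.X ^ (p ^ n + 1)})) :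
    IsGalois F' (RatFunc F) ∧
    Module.finrank F' (RatFunc F) = 2 * (p ^ n + 1) ∧
    Nonempty ((RatFunc F ≃ₐ[F'] RatFunc F) ≃* DihedralGroup (p ^ n + 1)) ∧
    ∀ S : Subgroup (RatFunc F ≃ₐ[F'] RatFunc F),
      (∀ σ, σ ∈ S ↔ ∀ x ∈ K, σ x = x) →
      S.Normal ∧ IsCyclic S ∧ Nat.card S = p ^ n + 1 ∧
        ∀ σ, σ ∉ S → ∀ τ ∈ S, σ * τ * σ⁻¹ = τ⁻¹ := by
  have := Fact.mk hp
  have : CharP F p := charP_of_card_eq_prime_pow (f := n * 2) (by rw [hcard, pow_mul])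
  have hq : 2 < p ^ n + 1 := by
    have := Fintype.one_lt_card (α := F)
    rw [hcard] at this
    have : 1 < p ^ n := (Nat.pow_lt_pow_iff_left two_ne_zero).mp (by simpa using this)
    omega
  obtain ⟨ζ, hζ, hζq⟩ := FiniteField.exists_isPrimitiveRoot_pow_eq_inv hcard
  set φ := iterateFrobeniusEquiv F p n
  have hφ : ∀ x, φ x = x ^ p ^ n := iterateFrobeniusEquiv_def F p n
  have hφφ : ∀ x, φ (φ x) = x := fun x => by
    rw [hφ, hφ, ← pow_mul, ← sq, ← hcard, FiniteField.pow_card]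
  have hφ₀ : ∀ a ∈ F₀, φ a = a := fun a ha => (hφ a).trans ((hF₀ a).mp ha)
  have hF₀' : ∀ a, φ a = a → a ∈ F₀ := fun a ha => (hF₀ a).mpr ((hφ a).symm.trans ha)
  subst hF' hK
  obtain ⟨hgal, hrank, hbij⟩ := RatFunc.isGalois_dihedralBase hζ hφ₀ hφφ (hφ ζ ▸ hζq) hF₀' hq
  exact ⟨hgal, hrank, ⟨(MulEquiv.ofBijective _ hbij).symm⟩,
    fun S hS => RatFunc.subgroup_fixing_X_pow_spec hζ hφ₀ hφφ _ hq hbij.2 hS⟩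

/-- Let `q = pⁿ`, `d = q + 1`, `F` the field with `q²` elements and `F₀` its subfield with `q`
elements.  Let `H = F(t)`, `K = F(tᵈ)` and `F' = F₀(tᵈ)`.  Then `H/F'` is Galois of degree
`2d` with Galois group the dihedral group of order `2d`; moreover the subgroup
`Gal(H/K) = {σ : σ fixes K pointwise}` is a cyclic normal subgroup of order `d`, and every
element outside of it acts on it by inversion (the nontrivial element of `Gal(K/F')` inverts
`Gal(H/K)`). -/
theorem stmt_9 (p n : ℕ) (hp : p.Prime) (hn : 0 < n)
    (F : Type) [Field F] [Fintype F] (hcard : Fintype.card F = (p ^ n) ^ 2)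
    (F₀ : Subfield F) (hF₀ : ∀ x : F, x ∈ F₀ ↔ x ^ (p ^ n) = x)
    (F' : Subfield (RatFunc F))
    (hF' : F' = Subfield.closure
      ((algebraMap F (RatFunc F)) '' (F₀ : Set F) ∪ {RatFunc.X ^ (p ^ n + 1)}))
    (K : Subfield (RatFunc F))
    (hK : K = Subfield.closure
      (Set.range (algebraMap F (RatFunc F)) ∪ {RatFunc.X ^ (p ^ n + 1)})) :
    IsGalois F' (RatFunc F) ∧
    Module.finrank F' (RatFunc F) = 2 * (p ^ n + 1) ∧
    Nonempty ((RatFunc F ≃ₐ[F'] RatFunc F) ≃* DihedralGroup (p ^ n + 1)) ∧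
    ∀ S : Subgroup (RatFunc F ≃ₐ[F'] RatFunc F),
      (∀ σ, σ ∈ S ↔ ∀ x ∈ K, σ x = x) →
      S.Normal ∧ IsCyclic S ∧ Nat.card S = p ^ n + 1 ∧
        ∀ σ, σ ∉ S → ∀ τ ∈ S, σ * τ * σ⁻¹ = τ⁻¹ :=
  stmt_9_general p n hp F hcard F₀ hF₀ F' hF' K hK
end

section
/- Let p be a prime, n a positive integer, q = p^n, and let F be a finite field with q^2 elements. Let \chi be a nontrivial multiplicative character of F with values in the complex numbers such that \chi^{q+1} is the trivial character (i.e., the order of \chi divides q + 1), and let \psi be the canonical additive character of F, \psi(x) = exp(2\pi i * Tr_{F/F_p}(x)/p). Then the Gauss sum g(\chi, \psi) = \sum_{x in F^x} \chi(x)\psi(x) equals q or -q. -/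
section Aux

variable {F : Type} [Field F] [Fintype F]

lemma aux_gauss_frob (p : ℕ) [ExpChar F p] [PerfectRing F p] (hp : p ≠ 0)
    (φ : MulChar F ℂ) (ψ : AddChar F ℂ) (hψp : ∀ x : F, ψ (x ^ p) = ψ x) :
    gaussSum (φ ^ p) ψ = gaussSum φ ψ := by
  simp only [gaussSum]
  refine Fintype.sum_equiv (frobeniusEquiv F p).toEquiv _ _ fun x => ?_
  have hx : (frobeniusEquiv F p).toEquiv x = x ^ p := by
    simp [frobeniusEquiv_apply, frobenius_def]
  rw [hx, map_pow, hψp, MulChar.pow_apply' φ hp]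

end Aux

/-- **Supersingular Gauss sums are pure.** Let `q = pⁿ` and let `F` be the field with `q²`
elements.  If `χ` is a nontrivial multiplicative character of `F` with `χ^(q+1) = 1` and `ψ`
is the canonical additive character `ψ(x) = exp(2πi·Tr_{F/𝔽_p}(x)/p)`, then the Gauss sum
`g(χ, ψ) = ∑ₓ χ(x)ψ(x)` equals `q` or `-q`. -/
theorem stmt_10 (p n : ℕ) (hp : p.Prime) (hn : 0 < n)
    (F : Type) [Field F] [Fintype F] (hcard : Fintype.card F = (p ^ n) ^ 2)
    [Algebra (ZMod p) F]
    (χ : MulChar F ℂ) (hχ : χ ≠ 1) (hord : χ ^ (p ^ n + 1) = 1)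
    (ψ : AddChar F ℂ)
    (hψ : ∀ x : F, ψ x = Complex.exp (2 * Real.pi * Complex.I *
      ((Algebra.trace (ZMod p) F x).val : ℂ) / p)) :
    gaussSum χ ψ = (p ^ n : ℂ) ∨ gaussSum χ ψ = -(p ^ n : ℂ) := by
  haveI : Fact p.Prime := ⟨hp⟩
  haveI hFp : CharP F p := charP_of_injective_algebraMap (algebraMap (ZMod p) F).injective p
  haveI : ExpChar F p := ExpChar.prime hp
  haveI : Module.Finite (ZMod p) F := Module.Finite.of_finite
  haveI : Algebra.IsAlgebraic (ZMod p) F := Algebra.IsAlgebraic.of_finite _ _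
  letI := Classical.decEq F
  set q : ℕ := p ^ n with hq
  -- Frobenius as an algebra equivalence
  let e : F ≃ₐ[ZMod p] F := AlgEquiv.ofRingEquiv (f := frobeniusEquiv F p)
    (fun r => by
      simp only [frobeniusEquiv_apply, frobenius_def, ← map_pow, ZMod.pow_card])
  have htr : ∀ x : F, Algebra.trace (ZMod p) F (x ^ p) = Algebra.trace (ZMod p) F x := by
    intro x
    have := Algebra.trace_eq_of_algEquiv e x
    simpa [e, AlgEquiv.ofRingEquiv, frobeniusEquiv_apply, frobenius_def] using this
  have hψp : ∀ x : F, ψ (x ^ p) = ψ x := fun x => by rw [hψ, hψ, htr]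
  -- Frobenius invariance of the Gauss sum, iterated
  have hiter : ∀ m : ℕ, gaussSum (χ ^ p ^ m) ψ = gaussSum χ ψ := by
    intro m
    induction m with
    | zero => simp
    | succ k ih =>
      rw [pow_succ, pow_mul, aux_gauss_frob p hp.ne_zero _ ψ hψp, ih]
  have hqinv : χ ^ q = χ⁻¹ := by
    apply eq_inv_of_mul_eq_one_left
    rw [← pow_succ]
    exact hord
  have hinv : gaussSum χ⁻¹ ψ = gaussSum χ ψ := by rw [← hqinv, hq, hiter n]
  -- χ(-1) = 1
  have hχm1 : χ (-1) = 1 := by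
    by_cases hp2 : p = 2
    · haveI : CharP F 2 := by rwa [hp2] at hFp
      rw [show (-1 : F) = 1 from CharTwo.neg_eq 1, map_one]
    · -- p odd, so q is odd
      have hqodd : Odd q := (hp.odd_of_ne_two hp2).pow
      have hq1 : 1 ≤ q := Nat.one_le_pow _ _ hp.pos
      have hp3 : 3 ≤ p := by have := hp.two_le; omega
      have hq3 : 3 ≤ q := le_trans hp3 (Nat.le_self_pow hn.ne' p)
      obtain ⟨g, hg⟩ := IsCyclic.exists_generator (α := Fˣ)
      have hog : orderOf g = q ^ 2 - 1 := by
        rw [orderOf_eq_card_of_forall_mem_zpowers hg, Nat.card_eq_fintype_card,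
          Fintype.card_units, hcard]
      -- m = (q²-1)/2
      obtain ⟨t, ht⟩ := hqodd
      have hqm1 : q - 1 = 2 * t := by omega
      have hsq : q ^ 2 - 1 = (q + 1) * (q - 1) := by
        simpa using Nat.sq_sub_sq q 1
      set m : ℕ := (q + 1) * t with hm
      have h2m : 2 * m = q ^ 2 - 1 := by rw [hsq, hqm1, hm]; ring
      have hmlt : m < q ^ 2 - 1 := by nlinarith
      have hmpos : 0 < m := by nlinarith
      have hgm : g ^ m * g ^ m = 1 := by
        rw [← pow_add, show m + m = 2 * m by ring, h2m, ← hog, pow_orderOf_eq_one]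
      have hgmne : g ^ m ≠ 1 := by
        intro h
        have := orderOf_dvd_of_pow_eq_one h
        rw [hog] at this
        exact absurd (Nat.le_of_dvd hmpos this) (by omega)
      have hcoe : ((g : F) ^ m) * ((g : F) ^ m) = 1 := by
        have := congrArg (Units.coeHom F) hgm
        simpa using this
      have hgmF : (g : F) ^ m = -1 := by
        rcases mul_self_eq_one_iff.mp hcoe with h | h
        · exact absurd (Units.ext (by simpa using h)) hgmne
        · exact h
      have hroot : χ (g : F) ^ (q + 1) = 1 := by
        have := congrArg (fun φ : MulChar F ℂ => φ (g : F)) hord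
        simpa [MulChar.pow_apply' χ (by omega : q + 1 ≠ 0), MulChar.one_apply_coe] using this
      calc χ (-1) = χ ((g : F) ^ m) := by rw [hgmF]
        _ = (χ (g : F) ^ (q + 1)) ^ t := by rw [map_pow, hm, pow_mul]
        _ = 1 := by rw [hroot, one_pow]
  -- ψ is nontrivial, hence primitive
  have hψne : ψ ≠ 1 := by
    have htne := Algebra.trace_ne_zero (ZMod p) F
    rw [Ne, LinearMap.ext_iff, not_forall] at htne
    obtain ⟨a, ha⟩ := htne
    simp only [LinearMap.zero_apply] at ha
    intro h
    have h1 : ψ a = 1 := by rw [h]; rfl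
    rw [hψ a] at h1
    obtain ⟨k, hk⟩ := Complex.exp_eq_one_iff.mp h1
    set v : ℕ := (Algebra.trace (ZMod p) F a).val with hv
    have hvne : v ≠ 0 := fun hv0 => ha ((ZMod.val_eq_zero _).mp hv0)
    have hvlt : v < p := ZMod.val_lt _
    have hp0 : (p : ℂ) ≠ 0 := Nat.cast_ne_zero.mpr hp.ne_zero
    have h2pi : (2 * (Real.pi : ℂ) * Complex.I) ≠ 0 := by
      simp [Real.pi_ne_zero, Complex.I_ne_zero]
    have h3 : ((v : ℂ) / p) * (2 * (Real.pi : ℂ) * Complex.I) =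
        (k : ℂ) * (2 * (Real.pi : ℂ) * Complex.I) := by
      rw [← hk]; ring
    have h4 : (v : ℂ) / p = k := mul_right_cancel₀ h2pi h3
    rw [div_eq_iff hp0] at h4
    have h5 : (v : ℤ) = k * p := by exact_mod_cast h4
    have hdvd : p ∣ v := by
      have : (p : ℤ) ∣ (v : ℤ) := ⟨k, by linarith⟩
      exact_mod_cast this
    exact absurd (Nat.le_of_dvd (Nat.pos_of_ne_zero hvne) hdvd) (by omega)
  have hprim : ψ.IsPrimitive := AddChar.IsPrimitive.of_ne_one hψne
  -- Put it together
  have hgg := gaussSum_mul_gaussSum_eq_card hχ hprim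
  have hinvinv : gaussSum χ⁻¹ ψ⁻¹ = gaussSum χ ψ := by
    have h1 := mul_gaussSum_inv_eq_gaussSum χ⁻¹ ψ
    have h2 : χ⁻¹ (-1 : F) = 1 := by
      rw [MulChar.inv_apply', inv_neg, inv_one, hχm1]
    rw [h2, one_mul] at h1
    rw [h1, hinv]
  rw [hinvinv, hcard] at hgg
  have hsq2 : gaussSum χ ψ * gaussSum χ ψ = (q : ℂ) * (q : ℂ) := by
    rw [hgg]; push_cast; ring
  have hres := mul_self_eq_mul_self_iff.mp hsq2
  have hqc : (q : ℂ) = (p : ℂ) ^ n := by rw [hq]; push_cast; ring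
  rw [hqc] at hres
  exact hres
end
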